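/- The map R_U(Δ) = cay((1/2)(Ω̄(Δ) − Ω̄(Δ)^T)) cay((1/2) Ω̄(Δ)^T) U on the symplectic Stiefel manifold satisfies the two retraction properties: R_U(0) = U and the differential of Δ ↦ R_U(Δ) at 0 is the identity on the tangent space, i.e., D R_U(0)[ξ] = ξ. -/

import Mathlib

open Matrix Filter Topology

attribute [local instance] Matrix.normedAddCommGroup Matrix.normedSpace

/-- The standard symplectic matrix `J_{2m} = [[0, I_m], [-I_m, 0]]`. -/
def symplJ (m : ℕ) : Matrix (Fin m ⊕ Fin m) (Fin m ⊕ Fin m) ℝ :=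
  Matrix.fromBlocks 0 1 (-1) 0

/-- The symplectic inverse `X⁺ = J_{2k}ᵀ Xᵀ J_{2n}`. -/
def symplInvRect {n k : ℕ} (X : Matrix (Fin n ⊕ Fin n) (Fin k ⊕ Fin k) ℝ) :
    Matrix (Fin k ⊕ Fin k) (Fin n ⊕ Fin n) ℝ :=
  (symplJ k)ᵀ * Xᵀ * symplJ n

/-- The Cayley transform `cay(X) = (I + X)(I − X)⁻¹`. -/
noncomputable def cay {n : ℕ} (X : Matrix (Fin n ⊕ Fin n) (Fin n ⊕ Fin n) ℝ) :
    Matrix (Fin n ⊕ Fin n) (Fin n ⊕ Fin n) ℝ :=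
  (1 + X) * (1 - X)⁻¹

/-- The horizontal lift operator
`Ω̄(Δ) = Δ (UᵀU)⁻¹ Uᵀ + J U (UᵀU)⁻¹ Δᵀ (I − Jᵀ U (UᵀU)⁻¹ Uᵀ J) J`. -/
noncomputable def omegaBar {n k : ℕ}
    (U Δ : Matrix (Fin n ⊕ Fin n) (Fin k ⊕ Fin k) ℝ) :
    Matrix (Fin n ⊕ Fin n) (Fin n ⊕ Fin n) ℝ :=
  Δ * (Uᵀ * U)⁻¹ * Uᵀ +
    symplJ n * U * (Uᵀ * U)⁻¹ * Δᵀ *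
      (1 - (symplJ n)ᵀ * U * (Uᵀ * U)⁻¹ * Uᵀ * symplJ n) * symplJ n

/-- The Cayley retraction
`R_U(Δ) = cay((1/2)(Ω̄(Δ) − Ω̄(Δ)ᵀ)) cay((1/2) Ω̄(Δ)ᵀ) U`. -/
noncomputable def cayRetr {n k : ℕ}
    (U Δ : Matrix (Fin n ⊕ Fin n) (Fin k ⊕ Fin k) ℝ) :
    Matrix (Fin n ⊕ Fin n) (Fin k ⊕ Fin k) ℝ :=
  cay ((1 / 2 : ℝ) • (omegaBar U Δ - (omegaBar U Δ)ᵀ)) *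
    cay ((1 / 2 : ℝ) • (omegaBar U Δ)ᵀ) * U

/-! ### Auxiliary lemmas -/

theorem hasDerivAt_matrix {m p : Type*} [Fintype m] [Fintype p]
    {f : ℝ → Matrix m p ℝ} {f' : Matrix m p ℝ} {x : ℝ}
    (h : ∀ i j, HasDerivAt (fun t => f t i j) (f' i j) x) :
    HasDerivAt f f' x :=
  hasDerivAt_pi.2 fun i => hasDerivAt_pi.2 fun j => h i j

theorem HasDerivAt.matrix_mul {m p q : Type*} [Fintype m] [Fintype p] [Fintype q]
    {f : ℝ → Matrix m p ℝ} {g : ℝ → Matrix p q ℝ} {f' : Matrix m p ℝ}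
    {g' : Matrix p q ℝ} {x : ℝ} (hf : HasDerivAt f f' x) (hg : HasDerivAt g g' x) :
    HasDerivAt (fun t => f t * g t) (f' * g x + f x * g') x := by
  apply hasDerivAt_matrix
  intro i j
  have hf' : ∀ a b, HasDerivAt (fun t => f t a b) (f' a b) x := fun a b =>
    (hasDerivAt_pi.1 (hasDerivAt_pi.1 hf a)) b
  have hg' : ∀ a b, HasDerivAt (fun t => g t a b) (g' a b) x := fun a b =>
    (hasDerivAt_pi.1 (hasDerivAt_pi.1 hg a)) b
  have h1 : ∀ t, (f t * g t) i j = ∑ l, f t i l * g t l j := fun t => Matrix.mul_apply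
  simp only [h1]
  have h2 : (f' * g x + f x * g') i j = ∑ l, (f' i l * g x l j + f x i l * g' l j) := by
    simp [Matrix.mul_apply, Matrix.add_apply, Finset.sum_add_distrib]
  rw [h2]
  exact HasDerivAt.fun_sum fun l _ => (hf' i l).mul (hg' l j)

theorem contAt_matinv {m : Type*} [Fintype m] [DecidableEq m]
    (A : Matrix m m ℝ) : ContinuousAt (fun t : ℝ => (1 - t • A)⁻¹) 0 := by
  have h : ∀ t : ℝ, (1 - t • A)⁻¹ = Ring.inverse (1 - t • A).det • (1 - t • A).adjugate :=
    fun t => Matrix.inv_def _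
  simp only [h]
  have hc : Continuous fun t : ℝ => (1 - t • A) :=
    continuous_const.sub (continuous_id.smul continuous_const)
  have hdet : Continuous fun t : ℝ => (1 - t • A).det := hc.matrix_det
  have hadj : Continuous fun t : ℝ => (1 - t • A).adjugate := hc.matrix_adjugate
  have hdet0 : (1 - (0:ℝ) • A).det ≠ 0 := by simp
  have hinv : ContinuousAt (fun t : ℝ => Ring.inverse (1 - t • A).det) 0 := by
    have h' : ContinuousAt (fun t : ℝ => ((1 - t • A).det)⁻¹) 0 :=
      (hdet.continuousAt).inv₀ hdet0
    refine h'.congr ?_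
    filter_upwards [hdet.continuousAt.eventually_ne hdet0] with t ht
    simp [Ring.inverse_eq_inv]
  exact hinv.smul hadj.continuousAt

theorem hasDerivAt_cayinv {m : Type*} [Fintype m] [DecidableEq m]
    (A : Matrix m m ℝ) : HasDerivAt (fun t : ℝ => (1 - t • A)⁻¹) A 0 := by
  refine (hasDerivAt_iff_tendsto_slope).2 ?_
  have hc : Continuous fun t : ℝ => (1 - t • A) :=
    continuous_const.sub (continuous_id.smul continuous_const)
  have hdet0 : (1 - (0:ℝ) • A).det ≠ 0 := by simp
  have hev : ∀ᶠ t : ℝ in 𝓝[≠] (0:ℝ), slope (fun t : ℝ => (1 - t • A)⁻¹) 0 t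
      = (1 - t • A)⁻¹ * A := by
    have hdetne : ∀ᶠ t : ℝ in 𝓝[≠] (0:ℝ), (1 - t • A).det ≠ 0 :=
      (hc.matrix_det.continuousAt.eventually_ne hdet0).filter_mono nhdsWithin_le_nhds
    filter_upwards [hdetne, self_mem_nhdsWithin] with t hdet (ht : t ≠ 0)
    have hu : IsUnit (1 - t • A).det := isUnit_iff_ne_zero.2 hdet
    have hVM : (1 - t • A)⁻¹ * (1 - t • A) = 1 := Matrix.nonsing_inv_mul _ hu
    have key : (1 - t • A)⁻¹ - 1 = t • ((1 - t • A)⁻¹ * A) := by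
      have h' : (1 - t • A)⁻¹ - 1 = (1 - t • A)⁻¹ * (1 - (1 - t • A)) := by
        rw [Matrix.mul_sub, hVM, Matrix.mul_one]
      rw [h']
      simp [Matrix.mul_smul]
    rw [slope_def_module]
    simp only [sub_zero]
    rw [show (1 - (0:ℝ) • A)⁻¹ = 1 by simp, key, smul_smul, inv_mul_cancel₀ ht, one_smul]
  refine Tendsto.congr' (hev.mono fun t ht => ht.symm) ?_
  have h2 : Tendsto (fun t : ℝ => (1 - t • A)⁻¹ * A) (𝓝 0) (𝓝 A) := by
    have h1 : ContinuousAt (fun t : ℝ => (1 - t • A)⁻¹ * A) 0 :=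
      (contAt_matinv A).mul continuousAt_const
    have h0 : (fun t : ℝ => (1 - t • A)⁻¹ * A) 0 = A := by simp
    simpa [h0] using h1.tendsto
  exact h2.mono_left nhdsWithin_le_nhds

theorem symplJ_transpose (m : ℕ) : (symplJ m)ᵀ = - symplJ m := by
  simp [symplJ, Matrix.fromBlocks_transpose, Matrix.fromBlocks_neg]

theorem symplJ_mul_self (m : ℕ) : symplJ m * symplJ m = -1 := by
  simp [symplJ, Matrix.fromBlocks_multiply, ← Matrix.fromBlocks_one, Matrix.fromBlocks_neg]

theorem gram_isUnit {n k : ℕ} (U : Matrix (Fin n ⊕ Fin n) (Fin k ⊕ Fin k) ℝ)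
    (hU : symplInvRect U * U = 1) : IsUnit (Uᵀ * U).det := by
  rw [isUnit_iff_ne_zero]
  intro hdet
  obtain ⟨v, hv, hv0⟩ := (Matrix.exists_mulVec_eq_zero_iff).2 hdet
  have hUv : U *ᵥ v = 0 := by
    have h1 : v ⬝ᵥ ((Uᵀ * U) *ᵥ v) = (U *ᵥ v) ⬝ᵥ (U *ᵥ v) := by
      rw [← Matrix.mulVec_mulVec, Matrix.dotProduct_mulVec, Matrix.vecMul_transpose]
    rw [hv0, dotProduct_zero] at h1
    exact (dotProduct_self_eq_zero).1 h1.symm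
  have hv' : v = 0 := by
    have h2 := congrArg (fun M => M *ᵥ v) hU
    simpa [Matrix.mulVec_mulVec, ← Matrix.mulVec_mulVec, hUv] using h2.symm
  exact hv hv'

theorem omegaBar_mul_self {n k : ℕ} (U ξ : Matrix (Fin n ⊕ Fin n) (Fin k ⊕ Fin k) ℝ)
    (hU : symplInvRect U * U = 1) : omegaBar U ξ * U = ξ := by
  have hG : (Uᵀ * U)⁻¹ * (Uᵀ * U) = 1 := Matrix.nonsing_inv_mul _ (gram_isUnit U hU)
  have hJJ : ∀ X : Matrix (Fin n ⊕ Fin n) (Fin k ⊕ Fin k) ℝ,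
      symplJ n * (symplJ n * X) = -X := by
    intro X
    rw [← Matrix.mul_assoc, symplJ_mul_self, Matrix.neg_mul, Matrix.one_mul]
  have hGU : ∀ X, (Uᵀ * U)⁻¹ * (Uᵀ * (U * X)) = X := by
    intro X
    rw [← Matrix.mul_assoc, ← Matrix.mul_assoc, Matrix.mul_assoc _ Uᵀ U, hG, Matrix.one_mul]
  rw [omegaBar, Matrix.add_mul]
  have h1 : ξ * (Uᵀ * U)⁻¹ * Uᵀ * U = ξ := by
    simp only [Matrix.mul_assoc]
    rw [hG, Matrix.mul_one]
  have h2 : (1 - (symplJ n)ᵀ * U * (Uᵀ * U)⁻¹ * Uᵀ * symplJ n) * (symplJ n * U) = 0 := by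
    rw [Matrix.sub_mul, Matrix.one_mul]
    simp only [Matrix.mul_assoc, hJJ, Matrix.mul_neg, hGU]
    rw [symplJ_transpose]
    simp [hG]
  calc ξ * (Uᵀ * U)⁻¹ * Uᵀ * U +
        symplJ n * U * (Uᵀ * U)⁻¹ * ξᵀ *
          (1 - (symplJ n)ᵀ * U * (Uᵀ * U)⁻¹ * Uᵀ * symplJ n) * symplJ n * U
      = ξ + symplJ n * U * (Uᵀ * U)⁻¹ * ξᵀ *
          ((1 - (symplJ n)ᵀ * U * (Uᵀ * U)⁻¹ * Uᵀ * symplJ n) * (symplJ n * U)) := by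
        rw [h1]; simp only [Matrix.mul_assoc]
    _ = ξ := by rw [h2, Matrix.mul_zero, add_zero]

theorem omegaBar_smul {n k : ℕ} (U ξ : Matrix (Fin n ⊕ Fin n) (Fin k ⊕ Fin k) ℝ) (t : ℝ) :
    omegaBar U (t • ξ) = t • omegaBar U ξ := by
  simp [omegaBar, Matrix.smul_mul, Matrix.mul_smul, Matrix.transpose_smul, smul_add]

theorem omegaBar_zero {n k : ℕ} (U : Matrix (Fin n ⊕ Fin n) (Fin k ⊕ Fin k) ℝ) :
    omegaBar U 0 = 0 := by
  simp [omegaBar]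

theorem cay_zero {n : ℕ} : cay (0 : Matrix (Fin n ⊕ Fin n) (Fin n ⊕ Fin n) ℝ) = 1 := by
  simp [cay]

theorem hasDerivAt_cay_smul {n : ℕ} (A : Matrix (Fin n ⊕ Fin n) (Fin n ⊕ Fin n) ℝ) :
    HasDerivAt (fun t : ℝ => cay (t • A)) (A + A) 0 := by
  have h1 : HasDerivAt (fun t : ℝ => 1 + t • A) A 0 := by
    have := ((hasDerivAt_id (0:ℝ)).smul_const A).const_add
      (1 : Matrix (Fin n ⊕ Fin n) (Fin n ⊕ Fin n) ℝ)
    simp only [id_eq, one_smul] at this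
    exact this
  have h2 := hasDerivAt_cayinv A
  have h3 := h1.matrix_mul h2
  simp only [cay]
  convert h3 using 1
  simp

theorem cayley_retraction_properties {n k : ℕ}
    (U : Matrix (Fin n ⊕ Fin n) (Fin k ⊕ Fin k) ℝ)
    (hU : symplInvRect U * U = 1) :
    cayRetr U 0 = U ∧
    ∀ ξ : Matrix (Fin n ⊕ Fin n) (Fin k ⊕ Fin k) ℝ,
      symplInvRect ξ * U + symplInvRect U * ξ = 0 →
      HasDerivAt (fun t : ℝ => cayRetr U (t • ξ)) ξ 0 := by
  constructor
  · simp [cayRetr, omegaBar_zero, cay_zero]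
  · intro ξ _
    set Ω := omegaBar U ξ with hΩ
    set A := (1 / 2 : ℝ) • (Ω - Ωᵀ) with hA
    set B := (1 / 2 : ℝ) • Ωᵀ with hB
    have hfun : (fun t : ℝ => cayRetr U (t • ξ))
        = fun t : ℝ => cay (t • A) * cay (t • B) * U := by
      funext t
      rw [cayRetr, omegaBar_smul, ← hΩ]
      have e1 : (1 / 2 : ℝ) • (t • Ω - (t • Ω)ᵀ) = t • A := by
        rw [hA, Matrix.transpose_smul, ← smul_sub, smul_comm]
      have e2 : (1 / 2 : ℝ) • (t • Ω)ᵀ = t • B := by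
        rw [hB, Matrix.transpose_smul, smul_comm]
      rw [e1, e2]
    rw [hfun]
    have hA' := hasDerivAt_cay_smul A
    have hB' := hasDerivAt_cay_smul B
    have hU' : HasDerivAt (fun _ : ℝ => U) 0 0 := hasDerivAt_const 0 U
    have h := (hA'.matrix_mul hB').matrix_mul hU'
    convert h using 1
    have hcay0 : ∀ m (X : Matrix (Fin m ⊕ Fin m) (Fin m ⊕ Fin m) ℝ),
        cay ((0:ℝ) • X) = 1 := by intro m X; simp [cay]
    rw [hcay0, hcay0]
    have hsum : A + A + (B + B) = Ω := by
      rw [hA, hB]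
      rw [← smul_add, ← smul_add, ← smul_add]
      rw [show Ω - Ωᵀ + (Ω - Ωᵀ) + (Ωᵀ + Ωᵀ) = (2:ℝ) • Ω by module]
      rw [smul_smul]
      norm_num
    rw [Matrix.mul_one, Matrix.one_mul, Matrix.mul_zero, add_zero, hsum, hΩ]
    exact (omegaBar_mul_self U ξ hU).symm
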